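/- arXiv:2306.03288 — 2 statements merged into one kernel-verified Lean document; each statement's English description precedes it below -/
import Mathlib

section
/- Let Z = X·Y where X ∈ ℝ^{I×K} and Y ∈ ℝ^{K×J} are entrywise nonnegative, rank(X) = rank(Y) = K, X^T satisfies the SSC, and Y satisfies the SSC. Then for any entrywise nonnegative matrices X̂ ∈ ℝ^{I×K} and Ŷ ∈ ℝ^{K×J} with Z = X̂·Ŷ, there exist a permutation matrix Π ∈ ℝ^{K×K} and a diagonal matrix Σ ∈ ℝ^{K×K} with strictly positive diagonal entries such that X̂ = X·Π·Σ and Ŷ = Σ^{-1}·Π^T·Y. -/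
open Matrix BigOperators

/-- Euclidean norm of a real vector. -/
noncomputable def l2norm {m : Type*} [Fintype m] (x : m → ℝ) : ℝ :=
  Real.sqrt (∑ i, (x i) ^ 2)

/-- `P` is a permutation matrix. -/
def IsPermMatrix {K : ℕ} (P : Matrix (Fin K) (Fin K) ℝ) : Prop :=
  ∃ σ : Equiv.Perm (Fin K), ∀ i j, P i j = if σ i = j then 1 else 0

/-- The conic hull of the columns of `H`. -/
def coneOf {K : ℕ} {J : Type*} [Fintype J] (H : Matrix (Fin K) J ℝ) : Set (Fin K → ℝ) :=
  {x | ∃ θ : J → ℝ, (∀ j, 0 ≤ θ j) ∧ x = H.mulVec θ}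

/-- The second-order cone `C = {x : √(K-1) ‖x‖₂ ≤ ∑ᵢ xᵢ}`. -/
def socC (K : ℕ) : Set (Fin K → ℝ) :=
  {x | Real.sqrt ((K : ℝ) - 1) * l2norm x ≤ ∑ i, x i}

/-- The sufficiently scattered condition. -/
def SSC {K : ℕ} {J : Type*} [Fintype J] (H : Matrix (Fin K) J ℝ) : Prop :=
  socC K ⊆ coneOf H ∧
  ∀ Q : Matrix (Fin K) (Fin K) ℝ, Qᵀ * Q = 1 → ¬ IsPermMatrix Q → ¬ (coneOf H ⊆ coneOf Q)

/-!
Write `Xh = X * A` and `Yh = B * Y`; the rank conditions force `A * B = 1`. Since `Yh = B * Y`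
and `Xhᵀ = Aᵀ * Xᵀ` are nonnegative and the second-order cone `C` lies in `cone(Y)` and
`cone(Xᵀ)`, the rows `bᵢ` of `B` and the columns `aᵢ` of `A` lie in the dual cone
`{v : ‖v‖ ≤ ∑ v}`. Hence
`K = ∑ entries of A * B = ∑ᵢ (∑ bᵢ)(∑ aᵢ) ≥ ∑ᵢ ‖bᵢ‖ ‖aᵢ‖ ≥ ∑ᵢ ⟪bᵢ, aᵢ⟫ = K`,
so equality holds in Cauchy–Schwarz and each `aᵢ` is a positive multiple of `bᵢ`. Then `AᵀA` is a
positive diagonal matrix, i.e. `A = Q * diagonal d` with `Q` orthogonal, and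
`cone(Y) = cone(Q * diagonal d * Yh) ⊆ cone(Q)`; the SSC of `Y` makes `Q` a permutation.
-/

section EuclideanNorm

variable {m : Type*} [Fintype m]

lemma l2norm_eq_norm (x : m → ℝ) : l2norm x = ‖WithLp.toLp 2 x‖ := by
  simp [l2norm, EuclideanSpace.norm_eq]

lemma l2norm_nonneg (x : m → ℝ) : 0 ≤ l2norm x :=
  Real.sqrt_nonneg _

lemma dotProduct_eq_inner (x y : m → ℝ) :
    x ⬝ᵥ y = inner ℝ (WithLp.toLp 2 x) (WithLp.toLp 2 y) := by
  simp [EuclideanSpace.inner_toLp_toLp, dotProduct_comm]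

lemma one_le_l2norm_mul_l2norm {u v : m → ℝ} (h : u ⬝ᵥ v = 1) :
    1 ≤ l2norm u * l2norm v := by
  rw [l2norm_eq_norm, l2norm_eq_norm, ← h, dotProduct_eq_inner]
  exact real_inner_le_norm _ _

lemma exists_pos_eq_smul_of_l2norm_mul_le_one {u v : m → ℝ} (h : u ⬝ᵥ v = 1)
    (hle : l2norm u * l2norm v ≤ 1) : ∃ c : ℝ, 0 < c ∧ v = c • u := by
  have hnorm : l2norm u * l2norm v = 1 := le_antisymm hle (one_le_l2norm_mul_l2norm h)
  have hu : 0 < l2norm u := pos_of_mul_pos_left (hnorm ▸ one_pos) (l2norm_nonneg v)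
  have hv : 0 < l2norm v := pos_of_mul_pos_right (hnorm ▸ one_pos) (l2norm_nonneg u)
  simp only [l2norm_eq_norm] at hnorm hu hv
  have hsmul := (inner_eq_norm_mul_iff_real (x := WithLp.toLp 2 u) (y := WithLp.toLp 2 v)).mp
    (by rw [← dotProduct_eq_inner, h, hnorm])
  refine ⟨‖WithLp.toLp 2 v‖ / ‖WithLp.toLp 2 u‖, div_pos hv hu, ?_⟩
  have hvu : WithLp.toLp 2 v = (‖WithLp.toLp 2 v‖ / ‖WithLp.toLp 2 u‖) • WithLp.toLp 2 u := by
    rw [div_eq_inv_mul, mul_smul, hsmul, smul_smul, inv_mul_cancel₀ hu.ne', one_smul]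
  simpa using congrArg WithLp.ofLp hvu

end EuclideanNorm

lemma one_mem_socC (K : ℕ) : (fun _ => 1 : Fin K → ℝ) ∈ socC K := by
  simp only [socC, l2norm, Set.mem_ofPred_eq, one_pow, Finset.sum_const, Finset.card_univ,
    Fintype.card_fin, nsmul_eq_mul, mul_one]
  calc √((K : ℝ) - 1) * √K ≤ √K * √K := by gcongr; linarith
    _ = K := Real.mul_self_sqrt K.cast_nonneg

lemma const_sub_mem_socC {K : ℕ} {w : Fin K → ℝ} (hw : ∑ i, w i = 0) :
    (fun i => √(((K : ℝ) - 1) * K * ∑ j, w j ^ 2) - K * w i) ∈ socC K := by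
  rcases Nat.eq_zero_or_pos K with rfl | hK
  · simp [socC, l2norm]
  have hK : (1 : ℝ) ≤ K := by exact_mod_cast hK
  set N := ∑ j, w j ^ 2
  set β := √(((K : ℝ) - 1) * K * N)
  have hβ : β ^ 2 = ((K : ℝ) - 1) * K * N := Real.sq_sqrt (by positivity)
  have hsum : ∑ i, (β - K * w i) = K * β := by
    simp [Finset.sum_sub_distrib, ← Finset.mul_sum, hw]
  have hsq : ∑ i, (β - K * w i) ^ 2 = K * β ^ 2 + K ^ 2 * N := by
    rw [Finset.sum_congr rfl fun i _ => show (β - K * w i) ^ 2 =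
        β ^ 2 - 2 * β * K * w i + K ^ 2 * w i ^ 2 by ring,
      Finset.sum_add_distrib, Finset.sum_sub_distrib, ← Finset.mul_sum, ← Finset.mul_sum, hw]
    simp [N]
  simp only [socC, Set.mem_ofPred_eq, l2norm, hsum, hsq]
  rw [← Real.sqrt_mul (by linarith),
    show ((K : ℝ) - 1) * (K * β ^ 2 + K ^ 2 * N) = (K * β) ^ 2 by rw [mul_pow, hβ]; ring,
    Real.sqrt_sq (by positivity)]

lemma l2norm_le_sum_of_forall_socC_dotProduct_nonneg {K : ℕ} {v : Fin K → ℝ}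
    (h : ∀ x ∈ socC K, 0 ≤ v ⬝ᵥ x) : l2norm v ≤ ∑ i, v i := by
  -- Test `v` against `1` and against the boundary point of `socC K` in direction `-w`,
  -- where `w` is the component of `K • v` orthogonal to `1`.
  have hs : 0 ≤ ∑ i, v i := by simpa [dotProduct] using h _ (one_mem_socC K)
  rcases Nat.eq_zero_or_pos K with rfl | hK
  · simp [l2norm]
  have hK : (1 : ℝ) ≤ K := by exact_mod_cast hK
  set s := ∑ i, v i
  set q := ∑ i, v i ^ 2
  set w : Fin K → ℝ := fun i => K * v i - s
  have hw : ∑ i, w i = 0 := by simp [w, Finset.sum_sub_distrib, ← Finset.mul_sum, s]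
  set N := ∑ i, w i ^ 2
  have hN : N = K ^ 2 * q - K * s ^ 2 := by
    simp only [N, w, sub_sq, Finset.sum_add_distrib, Finset.sum_sub_distrib, mul_pow,
      ← Finset.mul_sum, Finset.sum_const, Finset.card_univ, Fintype.card_fin, nsmul_eq_mul]
    simp only [mul_assoc, ← Finset.mul_sum, ← Finset.sum_mul]
    ring
  have hN0 : 0 ≤ N := Finset.sum_nonneg fun i _ => sq_nonneg _
  set β := √(((K : ℝ) - 1) * K * N)
  have hβ : β ^ 2 = ((K : ℝ) - 1) * K * N := Real.sq_sqrt (by positivity)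
  have hvx : 0 ≤ β * s - N := by
    convert h _ (const_sub_mem_socC hw) using 1
    simp only [dotProduct, mul_sub, Finset.sum_sub_distrib, ← Finset.sum_mul, w]
    simp only [mul_left_comm (v _), ← Finset.mul_sum, ← sq]
    rw [hN]
    ring
  have hNs : N ≤ ((K : ℝ) - 1) * K * s ^ 2 := by
    rcases hN0.eq_or_lt with hN0 | hN0
    · rw [← hN0]
      have : (0 : ℝ) ≤ K - 1 := by linarith
      positivity
    · refine le_of_mul_le_mul_left ?_ hN0
      calc N * N ≤ (β * s) ^ 2 := by nlinarith
        _ = N * (((K : ℝ) - 1) * K * s ^ 2) := by rw [mul_pow, hβ]; ring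
  have hqs : q ≤ s ^ 2 := by
    refine le_of_mul_le_mul_left ?_ (by positivity : (0 : ℝ) < K ^ 2)
    nlinarith
  calc l2norm v = √q := rfl
    _ ≤ √(s ^ 2) := Real.sqrt_le_sqrt hqs
    _ = s := Real.sqrt_sq hs

section Factorization

variable {F : Type*} [Field F] {m n κ : Type*} [Fintype m] [Fintype n] [Fintype κ]
  [DecidableEq κ]

lemma exists_mul_eq_one_of_rank_eq_card_height {A : Matrix κ n F}
    (h : A.rank = Fintype.card κ) : ∃ B : Matrix n κ F, A * B = 1 := by
  refine mulVec_surjective_iff_exists_right_inverse.mp fun y => ?_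
  have hrange : LinearMap.range A.mulVecLin = ⊤ :=
    Submodule.eq_top_of_finrank_eq (by rw [Module.finrank_fintype_fun_eq_card]; exact h)
  exact LinearMap.range_eq_top.mp hrange y

lemma exists_mul_eq_one_of_rank_eq_card_width {A : Matrix m κ F}
    (h : A.rank = Fintype.card κ) : ∃ B : Matrix κ m F, B * A = 1 := by
  obtain ⟨B, hB⟩ := exists_mul_eq_one_of_rank_eq_card_height (A := Aᵀ) (by rwa [rank_transpose])
  exact ⟨Bᵀ, by rw [← transpose_transpose A, ← transpose_mul, hB, transpose_one]⟩

lemma exists_mul_eq_one_of_mul_eq_mul {X X' : Matrix m κ F} {Y Y' : Matrix κ n F}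
    {L : Matrix κ m F} {R : Matrix n κ F} (hL : L * X = 1) (hR : Y * R = 1)
    (h : X * Y = X' * Y') :
    ∃ A B : Matrix κ κ F, A * B = 1 ∧ X' = X * A ∧ Y' = B * Y := by
  have hAB : L * X' * (Y' * R) = 1 := by
    rw [Matrix.mul_assoc, ← Matrix.mul_assoc X', ← h, Matrix.mul_assoc, ← Matrix.mul_assoc,
      hL, hR, Matrix.one_mul]
  have hBA := mul_eq_one_comm.mp hAB
  refine ⟨L * X', Y' * R, hAB, ?_, ?_⟩
  · calc X' = X' * (Y' * R) * (L * X') := by rw [Matrix.mul_assoc, hBA, Matrix.mul_one]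
      _ = X * (L * X') := by rw [← Matrix.mul_assoc X', ← h, Matrix.mul_assoc X, hR,
          Matrix.mul_one]
  · calc Y' = Y' * R * (L * X') * Y' := by rw [hBA, Matrix.one_mul]
      _ = Y' * R * Y := by rw [Matrix.mul_assoc (Y' * R), Matrix.mul_assoc L, ← h,
          ← Matrix.mul_assoc L, hL, Matrix.one_mul]

end Factorization

lemma coneOf_mul_subset {K : ℕ} {n J : Type*} [Fintype n] [Fintype J]
    (Q : Matrix (Fin K) n ℝ) {M : Matrix n J ℝ} (hM : ∀ i j, 0 ≤ M i j) :
    coneOf (Q * M) ⊆ coneOf Q := by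
  rintro _ ⟨θ, hθ, rfl⟩
  exact ⟨M *ᵥ θ, fun i => Finset.sum_nonneg fun j _ => mul_nonneg (hM i j) (hθ j),
    (mulVec_mulVec θ Q M).symm⟩

lemma l2norm_row_le_sum_of_socC_subset_coneOf {K : ℕ} {n J : Type*} [Fintype J]
    {B : Matrix n (Fin K) ℝ} {H : Matrix (Fin K) J ℝ} (hH : socC K ⊆ coneOf H)
    (hBH : ∀ i j, 0 ≤ (B * H) i j) (i : n) : l2norm (B i) ≤ ∑ k, B i k := by
  refine l2norm_le_sum_of_forall_socC_dotProduct_nonneg fun x hx => ?_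
  obtain ⟨θ, hθ, rfl⟩ := hH hx
  rw [dotProduct_mulVec]
  exact dotProduct_nonneg_of_nonneg (fun j => by rw [← mul_apply_eq_vecMul]; exact hBH i j) hθ

section Diagonal

variable {n : Type*} [Fintype n] [DecidableEq n]

lemma sum_row_sum_mul_col_sum_eq_card {A B : Matrix n n ℝ} (hAB : A * B = 1) :
    ∑ i, (∑ j, B i j) * (∑ j, Aᵀ i j) = Fintype.card n :=
  calc ∑ i, (∑ j, B i j) * (∑ j, Aᵀ i j) = ∑ i, ∑ j, (A * B) i j := by
        simp only [mul_apply, transpose_apply, Finset.sum_mul_sum]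
        rw [Finset.sum_comm_cycle]
        refine Finset.sum_congr rfl fun _ _ => ?_
        rw [Finset.sum_comm]
        simp only [mul_comm (B _ _)]
    _ = Fintype.card n := by simp [hAB, one_apply]

lemma exists_transpose_eq_diagonal_mul {A B : Matrix n n ℝ} (hAB : A * B = 1)
    (hA : ∀ i, l2norm (Aᵀ i) ≤ ∑ j, Aᵀ i j) (hB : ∀ i, l2norm (B i) ≤ ∑ j, B i j) :
    ∃ c : n → ℝ, (∀ i, 0 < c i) ∧ Aᵀ = diagonal c * B := by
  have hBA : B * A = 1 := mul_eq_one_comm.mp hAB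
  have hdot : ∀ i, B i ⬝ᵥ Aᵀ i = 1 := fun i =>
    (congr_fun₂ hBA i i).trans (one_apply_eq i)
  have hle : ∀ i, l2norm (B i) * l2norm (Aᵀ i) ≤ (∑ j, B i j) * (∑ j, Aᵀ i j) := fun i =>
    mul_le_mul (hB i) (hA i) (l2norm_nonneg _) ((l2norm_nonneg _).trans (hB i))
  have hone : ∀ i, (∑ j, B i j) * (∑ j, Aᵀ i j) = 1 := by
    have hge : ∀ i ∈ Finset.univ, (1 : ℝ) ≤ (∑ j, B i j) * (∑ j, Aᵀ i j) := fun i _ =>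
      (one_le_l2norm_mul_l2norm (hdot i)).trans (hle i)
    have hsum : ∑ _i : n, (1 : ℝ) = ∑ i, (∑ j, B i j) * (∑ j, Aᵀ i j) := by
      rw [sum_row_sum_mul_col_sum_eq_card hAB]; simp
    exact fun i => ((Finset.sum_eq_sum_iff_of_le hge).mp hsum i (Finset.mem_univ i)).symm
  choose c hc hcA using fun i =>
    exists_pos_eq_smul_of_l2norm_mul_le_one (hdot i) ((hle i).trans (hone i).le)
  refine ⟨c, hc, ?_⟩
  ext i j
  rw [diagonal_mul, hcA i, Pi.smul_apply, smul_eq_mul]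

lemma diagonal_inv_mul_diagonal {d : n → ℝ} (hd : ∀ i, d i ≠ 0) :
    diagonal (fun i => (d i)⁻¹) * diagonal d = 1 := by
  rw [diagonal_mul_diagonal, ← diagonal_one]
  exact congrArg diagonal (funext fun i => inv_mul_cancel₀ (hd i))

lemma exists_orthogonal_mul_diagonal {A : Matrix n n ℝ} {c : n → ℝ} (hc : ∀ i, 0 < c i)
    (h : Aᵀ * A = diagonal c) :
    ∃ (Q : Matrix n n ℝ) (d : n → ℝ), Qᵀ * Q = 1 ∧ (∀ i, 0 < d i) ∧ A = Q * diagonal d := by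
  set d : n → ℝ := fun i => √(c i)
  have hd : ∀ i, 0 < d i := fun i => Real.sqrt_pos.mpr (hc i)
  refine ⟨A * diagonal (fun i => (d i)⁻¹), d, ?_, hd, ?_⟩
  · rw [transpose_mul, diagonal_transpose, Matrix.mul_assoc, ← Matrix.mul_assoc Aᵀ, h,
      diagonal_mul_diagonal, diagonal_mul_diagonal, ← diagonal_one]
    congr 1
    ext i
    rw [← show d i * d i = c i from Real.mul_self_sqrt (hc i).le]
    field_simp [(hd i).ne']
  · rw [Matrix.mul_assoc, diagonal_inv_mul_diagonal fun i => (hd i).ne', Matrix.mul_one]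

end Diagonal

theorem stmt5_general {I J K : ℕ}
    (X : Matrix (Fin I) (Fin K) ℝ) (Y : Matrix (Fin K) (Fin J) ℝ)
    (hXrank : X.rank = K) (hYrank : Y.rank = K)
    (hXssc : SSC Xᵀ) (hYssc : SSC Y)
    (Xh : Matrix (Fin I) (Fin K) ℝ) (Yh : Matrix (Fin K) (Fin J) ℝ)
    (hXh0 : ∀ i k, 0 ≤ Xh i k) (hYh0 : ∀ k j, 0 ≤ Yh k j)
    (heq : X * Y = Xh * Yh) :
    ∃ (Pm : Matrix (Fin K) (Fin K) ℝ) (d : Fin K → ℝ),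
      IsPermMatrix Pm ∧ (∀ i, 0 < d i) ∧
      Xh = X * Pm * Matrix.diagonal d ∧
      Yh = Matrix.diagonal (fun i => (d i)⁻¹) * Pmᵀ * Y := by
  obtain ⟨L, hL⟩ := exists_mul_eq_one_of_rank_eq_card_width (A := X) (by rwa [Fintype.card_fin])
  obtain ⟨R, hR⟩ := exists_mul_eq_one_of_rank_eq_card_height (A := Y) (by rwa [Fintype.card_fin])
  obtain ⟨A, B, hAB, rfl, rfl⟩ := exists_mul_eq_one_of_mul_eq_mul hL hR heq
  have hA := l2norm_row_le_sum_of_socC_subset_coneOf (B := Aᵀ) hXssc.1 fun i j => by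
    rw [← transpose_mul]; exact hXh0 j i
  have hB := l2norm_row_le_sum_of_socC_subset_coneOf hYssc.1 hYh0
  obtain ⟨c, hc, hAc⟩ := exists_transpose_eq_diagonal_mul hAB hA hB
  obtain ⟨Q, d, hQ, hd, rfl⟩ := exists_orthogonal_mul_diagonal hc (by
    rw [hAc, Matrix.mul_assoc, mul_eq_one_comm.mp hAB, Matrix.mul_one])
  have hBQ : B = diagonal (fun i => (d i)⁻¹) * Qᵀ := by
    refine (left_inv_eq_right_inv ?_ hAB).symm
    rw [Matrix.mul_assoc, ← Matrix.mul_assoc Qᵀ, hQ, Matrix.one_mul,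
      diagonal_inv_mul_diagonal fun i => (hd i).ne']
  have hYQ : coneOf Y ⊆ coneOf Q := by
    have hY : Y = Q * (diagonal d * (B * Y)) := by
      rw [← Matrix.mul_assoc, ← Matrix.mul_assoc, hAB, Matrix.one_mul]
    rw [hY]
    refine coneOf_mul_subset Q fun i j => ?_
    rw [diagonal_mul]
    exact mul_nonneg (hd i).le (hYh0 i j)
  exact ⟨Q, d, not_not.mp fun hQperm => hYssc.2 Q hQ hQperm hYQ, hd,
    (Matrix.mul_assoc _ _ _).symm, by rw [hBQ]⟩

theorem stmt5 {I J K : ℕ}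
    (X : Matrix (Fin I) (Fin K) ℝ) (Y : Matrix (Fin K) (Fin J) ℝ)
    (hX0 : ∀ i k, 0 ≤ X i k) (hY0 : ∀ k j, 0 ≤ Y k j)
    (hXrank : X.rank = K) (hYrank : Y.rank = K)
    (hXssc : SSC Xᵀ) (hYssc : SSC Y)
    (Xh : Matrix (Fin I) (Fin K) ℝ) (Yh : Matrix (Fin K) (Fin J) ℝ)
    (hXh0 : ∀ i k, 0 ≤ Xh i k) (hYh0 : ∀ k j, 0 ≤ Yh k j)
    (heq : X * Y = Xh * Yh) :
    ∃ (Pm : Matrix (Fin K) (Fin K) ℝ) (d : Fin K → ℝ),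
      IsPermMatrix Pm ∧ (∀ i, 0 < d i) ∧
      Xh = X * Pm * Matrix.diagonal d ∧
      Yh = Matrix.diagonal (fun i => (d i)⁻¹) * Pmᵀ * Y :=
  stmt5_general X Y hXrank hYrank hXssc hYssc Xh Yh hXh0 hYh0 heq
end

section
/- Let F ∈ ℝ^{K×N} be entrywise nonnegative with every column summing to 1, rank(F) = K, and F satisfying the SSC. Let Q ∈ ℝ^{K×K} be invertible, not a permutation matrix, and such that Q·F is entrywise nonnegative with every column summing to 1. Then det((Q·F)·(Q·F)^T) < det(F·F^T). -/
/-!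
Since `rank F = K`, `F Fᵀ` is positive definite and `det ((Q F) (Q F)ᵀ) = det Q ^ 2 * det (F Fᵀ)`,
so it suffices to show `det Q ^ 2 < 1`. As `F` and `Q F` both have unit column sums, so does `Q`.
Every row `qᵢ` of `Q` is nonnegative on `cone F ⊇ C`, hence lies in the dual cone
`C* = {q | ‖q‖₂ ≤ ∑ q}`. With `rᵢ` the row sums of `Q`, Hadamard's inequality and AM-GM give
`|det Q| ≤ ∏ ‖qᵢ‖₂ ≤ ∏ rᵢ ≤ ((∑ rᵢ) / K) ^ K = 1`. In the equality case `Q` is orthogonal, and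
`cone F ⊆ cone Qᵀ` because `Q` maps `cone F` into the nonnegative orthant; since `Qᵀ` is not a
permutation matrix, this contradicts the SSC.
-/

open Matrix BigOperators

section AMGM

variable {ι : Type*} [Fintype ι] {a : ι → ℝ}

lemma sum_log_nonpos_of_sum_le_card (ha : ∀ i, 0 < a i) (hsum : ∑ i, a i ≤ Fintype.card ι) :
    ∑ i, Real.log (a i) ≤ 0 :=
  calc ∑ i, Real.log (a i) ≤ ∑ i, (a i - 1) :=
        Finset.sum_le_sum fun i _ => Real.log_le_sub_one_of_pos (ha i)
    _ = ∑ i, a i - Fintype.card ι := by simp [Finset.sum_sub_distrib]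
    _ ≤ 0 := sub_nonpos.mpr hsum

lemma prod_le_one_of_sum_le_card (ha : ∀ i, 0 < a i) (hsum : ∑ i, a i ≤ Fintype.card ι) :
    ∏ i, a i ≤ 1 := by
  rw [← Real.log_nonpos_iff (Finset.prod_nonneg fun i _ => (ha i).le),
    Real.log_prod fun i _ => (ha i).ne']
  exact sum_log_nonpos_of_sum_le_card ha hsum

lemma eq_one_of_sum_le_card_of_one_le_prod (ha : ∀ i, 0 < a i)
    (hsum : ∑ i, a i ≤ Fintype.card ι) (hprod : 1 ≤ ∏ i, a i) (i : ι) : a i = 1 := by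
  have hlog : ∀ j ∈ Finset.univ, Real.log (a j) ≤ a j - 1 :=
    fun j _ => Real.log_le_sub_one_of_pos (ha j)
  have hlog_sum : 0 ≤ ∑ j, Real.log (a j) := by
    rw [← Real.log_prod fun j _ => (ha j).ne']
    exact Real.log_nonneg hprod
  have hsub : ∑ j, (a j - 1) ≤ 0 := by simpa [Finset.sum_sub_distrib] using hsum
  have heq := (Finset.sum_eq_sum_iff_of_le hlog).mp
    (le_antisymm (Finset.sum_le_sum hlog) (hsub.trans hlog_sum)) i (Finset.mem_univ i)
  by_contra hne
  exact (Real.log_lt_sub_one_of_pos (ha i) hne).ne heq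

end AMGM

namespace Matrix

variable {m n : Type*} [Fintype m] [Fintype n]

/-- The eigenvalues of `M` are nonnegative with sum `≤ card n` and product `≥ 1`, so by AM-GM they
all equal `1`. -/
lemma PosSemidef.eq_one_of_trace_le_card_of_one_le_det [DecidableEq n] {M : Matrix n n ℝ}
    (hM : M.PosSemidef) (htr : M.trace ≤ Fintype.card n) (hdet : 1 ≤ M.det) : M = 1 := by
  have hsum : ∑ i, hM.isHermitian.eigenvalues i ≤ Fintype.card n := by
    simpa [hM.isHermitian.trace_eq_sum_eigenvalues] using htr
  have hprod : 1 ≤ ∏ i, hM.isHermitian.eigenvalues i := by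
    simpa [hM.isHermitian.det_eq_prod_eigenvalues] using hdet
  have hpos : ∀ i, 0 < hM.isHermitian.eigenvalues i := by
    intro i
    refine (hM.eigenvalues_nonneg i).lt_of_ne fun h => ?_
    rw [Finset.prod_eq_zero (Finset.mem_univ i) h.symm] at hprod
    exact absurd hprod (by norm_num)
  have heig : RCLike.ofReal ∘ hM.isHermitian.eigenvalues = (1 : n → ℝ) := by
    funext i
    simp [eq_one_of_sum_le_card_of_one_le_prod hpos hsum hprod i]
  rw [hM.isHermitian.spectral_theorem, heig, Pi.one_def, diagonal_one, map_one]

lemma isUnit_mul_transpose_of_rank_eq_card [DecidableEq m] {F : Matrix m n ℝ}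
    (hF : F.rank = Fintype.card m) : IsUnit (F * Fᵀ) := by
  rw [← mulVec_surjective_iff_isUnit, ← coe_mulVecLin, ← LinearMap.range_eq_top]
  apply Submodule.eq_top_of_finrank_eq
  rw [← rank, rank_self_mul_transpose, hF, Module.finrank_fintype_fun_eq_card]

end Matrix

lemma mem_socC_of_sq_le {K : ℕ} {x : Fin K → ℝ} (hx : 0 ≤ ∑ i, x i)
    (hsq : ((K : ℝ) - 1) * ∑ i, x i ^ 2 ≤ (∑ i, x i) ^ 2) : x ∈ socC K := by
  change _ * Real.sqrt _ ≤ _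
  rw [← Real.sqrt_mul' _ (Finset.sum_nonneg fun i _ => sq_nonneg _)]
  exact (Real.sqrt_le_sqrt hsq).trans_eq (Real.sqrt_sq hx)

lemma l2norm_le_sum_of_forall_socC {K : ℕ} (q : Fin K → ℝ)
    (hq : ∀ x ∈ socC K, 0 ≤ ∑ i, q i * x i) : l2norm q ≤ ∑ i, q i := by
  rcases Nat.eq_zero_or_pos K with rfl | hK
  · simp [l2norm]
  have hK' : (1 : ℝ) ≤ K := by exact_mod_cast hK
  set s := ∑ i, q i
  set m := (K : ℝ) * ∑ i, q i ^ 2 - s ^ 2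
  have hm : 0 ≤ m := by
    have := sq_sum_le_card_mul_sum_sq (s := Finset.univ) (f := q)
    simp only [Finset.card_univ, Fintype.card_fin] at this
    linarith
  have hs : 0 ≤ s := by
    simpa using hq (fun _ => 1) (mem_socC_of_sq_le (by simp) (by simp; nlinarith))
  -- Testing `q` against the boundary point `x = (s + d) • 1 - K • q` of `socC K` gives `m ≤ s d`.
  set d := Real.sqrt (((K : ℝ) - 1) * m)
  have hd : d ^ 2 = ((K : ℝ) - 1) * m := Real.sq_sqrt (mul_nonneg (by linarith) hm)
  set x : Fin K → ℝ := fun i => (s + d) - K * q i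
  have hx_sum : ∑ i, x i = K * d := by
    simp [x, Finset.sum_sub_distrib, ← Finset.mul_sum, s]
  have hx_sq : ∑ i, x i ^ 2 = K * (d ^ 2 + m) := by
    simp only [x, sub_sq, Finset.sum_add_distrib, Finset.sum_sub_distrib, mul_pow,
      ← Finset.mul_sum, Finset.sum_const, Finset.card_univ, Fintype.card_fin, nsmul_eq_mul,
      mul_assoc]
    simp only [m, s]; ring
  have hqx : ∑ i, q i * x i = s * d - m := by
    simp only [x, mul_sub, Finset.sum_sub_distrib, ← Finset.sum_mul, m, s]
    simp only [mul_left_comm _ (K : ℝ), ← Finset.mul_sum, ← sq]; ring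
  have hsd : m ≤ s * d := by
    have := hq x (mem_socC_of_sq_le (by rw [hx_sum]; positivity) (by
      rw [hx_sum, hx_sq]; nlinarith))
    linarith
  have hm_sq : m * m ≤ ((K - 1) * s ^ 2) * m :=
    calc m * m ≤ (s * d) * (s * d) := mul_le_mul hsd hsd hm (by positivity)
      _ = ((K - 1) * s ^ 2) * m := by linear_combination s ^ 2 * hd
  have hm_le : m ≤ (K - 1) * s ^ 2 := by
    rcases hm.eq_or_lt with hm0 | hm0
    · rw [← hm0]; positivity
    · exact le_of_mul_le_mul_right hm_sq hm0
  have hq_sq : ∑ i, q i ^ 2 ≤ s ^ 2 := by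
    have : (K : ℝ) * ∑ i, q i ^ 2 ≤ K * s ^ 2 := by linarith
    exact le_of_mul_le_mul_left this (by positivity)
  exact (Real.sqrt_le_sqrt hq_sq).trans_eq (Real.sqrt_sq hs)

namespace Matrix

variable {n : Type*} [Fintype n] [DecidableEq n]

/-- Equality case of Hadamard's inequality `det P ^ 2 ≤ ∏ᵢ ‖Pᵢ‖₂ ^ 2` for rows of norm at most one;
`P * Pᵀ` has trace at most `card n` and determinant `det P ^ 2`. -/
lemma mul_transpose_eq_one_of_sum_sq_le_one {P : Matrix n n ℝ} (hP : ∀ i, ∑ j, P i j ^ 2 ≤ 1)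
    (hdet : 1 ≤ P.det ^ 2) : P * Pᵀ = 1 := by
  apply PosSemidef.eq_one_of_trace_le_card_of_one_le_det
  · simpa [conjTranspose_eq_transpose_of_trivial] using posSemidef_self_mul_conjTranspose P
  · calc (P * Pᵀ).trace = ∑ i, ∑ j, P i j ^ 2 := by simp [trace, mul_apply, sq]
      _ ≤ ∑ _i : n, (1 : ℝ) := Finset.sum_le_sum fun i _ => hP i
      _ = Fintype.card n := by simp
  · rwa [det_mul, det_transpose, ← sq]

/-- Rescaling the rows by their sums `rᵢ`, which are positive and add up to `card n`, reduces this
to `mul_transpose_eq_one_of_sum_sq_le_one`; AM-GM gives `∏ᵢ rᵢ ≤ 1`, and equality forces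
`rᵢ = 1`. -/
lemma mul_transpose_eq_one_of_l2norm_le_row_sum {Q : Matrix n n ℝ}
    (hrow : ∀ i, l2norm (Q i) ≤ ∑ j, Q i j) (hcol : ∀ j, ∑ i, Q i j = 1)
    (hdet : 1 ≤ Q.det ^ 2) : Q * Qᵀ = 1 := by
  set r : n → ℝ := fun i => ∑ j, Q i j
  have hr_sum : ∑ i, r i = Fintype.card n := by
    simp only [r]
    exact Finset.sum_comm.trans (by simp [hcol])
  have hrow_sq : ∀ i, ∑ j, Q i j ^ 2 ≤ r i ^ 2 := fun i =>
    (Real.sqrt_le_left ((Real.sqrt_nonneg _).trans (hrow i))).mp (hrow i)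
  have hr_pos : ∀ i, 0 < r i := by
    intro i
    refine ((Real.sqrt_nonneg _).trans (hrow i)).lt_of_ne fun hr => ?_
    have hsq : ∑ j, Q i j ^ 2 = 0 :=
      le_antisymm (by simpa [r, ← hr] using hrow_sq i) (Finset.sum_nonneg fun j _ => sq_nonneg _)
    have hQi : ∀ j, Q i j = 0 := fun j => pow_eq_zero_iff two_ne_zero |>.mp <|
      (Finset.sum_eq_zero_iff_of_nonneg fun j _ => sq_nonneg _).mp hsq j (Finset.mem_univ j)
    rw [det_eq_zero_of_row_eq_zero i hQi] at hdet
    norm_num at hdet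
  have hr_prod : ∏ i, r i ≤ 1 := prod_le_one_of_sum_le_card hr_pos hr_sum.le
  have hr_prod_pos : 0 < ∏ i, r i := Finset.prod_pos fun i _ => hr_pos i
  set P := diagonal r⁻¹ * Q
  have hP : ∀ i j, P i j = (r i)⁻¹ * Q i j := by simp [P, diagonal_mul]
  have hdetP : P.det = (∏ i, r i)⁻¹ * Q.det := by
    simp [P, det_mul, det_diagonal, Finset.prod_inv_distrib]
  have hPPt : P * Pᵀ = 1 := by
    refine mul_transpose_eq_one_of_sum_sq_le_one (fun i => ?_) ?_
    · simp only [hP, mul_pow, ← Finset.mul_sum]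
      rw [inv_pow, inv_mul_le_one₀ (pow_pos (hr_pos i) 2)]
      exact hrow_sq i
    · rw [hdetP, mul_pow, inv_pow]
      exact one_le_mul_of_one_le_of_one_le
        ((one_le_inv₀ (by positivity)).mpr (pow_le_one₀ hr_prod_pos.le hr_prod)) hdet
  have hr_prod_ge : 1 ≤ ∏ i, r i := by
    have hdetP_sq : P.det ^ 2 = 1 := by simpa [det_mul, det_transpose, sq] using congrArg det hPPt
    rw [hdetP, mul_pow, inv_pow, inv_mul_eq_one₀ (by positivity)] at hdetP_sq
    exact (one_le_pow_iff_of_nonneg hr_prod_pos.le two_ne_zero).mp (hdetP_sq ▸ hdet)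
  have hr_one := eq_one_of_sum_le_card_of_one_le_prod hr_pos hr_sum.le hr_prod_ge
  have hPQ : P = Q := by ext i j; simp [hP, hr_one]
  rwa [hPQ] at hPPt

end Matrix

lemma IsPermMatrix.of_transpose {K : ℕ} {P : Matrix (Fin K) (Fin K) ℝ} (h : IsPermMatrix Pᵀ) :
    IsPermMatrix P := by
  obtain ⟨σ, hσ⟩ := h
  refine ⟨σ⁻¹, fun i j => ?_⟩
  simp only [← transpose_apply P j i, hσ, Equiv.Perm.inv_eq_iff_eq, @eq_comm _ (σ j)]

lemma mulVec_nonneg_of_mem_coneOf {ι J : Type*} [Fintype J] {K : ℕ} {F : Matrix (Fin K) J ℝ}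
    {Q : Matrix ι (Fin K) ℝ} (hQF : ∀ k j, 0 ≤ (Q * F) k j) {x : Fin K → ℝ} (hx : x ∈ coneOf F)
    (k : ι) : 0 ≤ (Q *ᵥ x) k := by
  obtain ⟨θ, hθ, rfl⟩ := hx
  rw [mulVec_mulVec]
  exact Finset.sum_nonneg fun j _ => mul_nonneg (hQF k j) (hθ j)

lemma coneOf_subset_coneOf_transpose {J : Type*} [Fintype J] {K : ℕ} {F : Matrix (Fin K) J ℝ}
    {Q : Matrix (Fin K) (Fin K) ℝ} (hQ : Qᵀ * Q = 1) (hQF : ∀ k j, 0 ≤ (Q * F) k j) :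
    coneOf F ⊆ coneOf Qᵀ :=
  fun x hx => ⟨Q *ᵥ x, mulVec_nonneg_of_mem_coneOf hQF hx, by rw [mulVec_mulVec, hQ, one_mulVec]⟩

theorem stmt10_general {K N : ℕ}
    (F : Matrix (Fin K) (Fin N) ℝ)
    (hF1 : ∀ n, ∑ k, F k n = 1)
    (hFrank : F.rank = K) (hFssc : SSC F)
    (Q : Matrix (Fin K) (Fin K) ℝ) (hQnp : ¬ IsPermMatrix Q)
    (hQF0 : ∀ k n, 0 ≤ (Q * F) k n) (hQF1 : ∀ n, ∑ k, (Q * F) k n = 1) :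
    ((Q * F) * (Q * F)ᵀ).det < (F * Fᵀ).det := by
  have hFFt : IsUnit (F * Fᵀ) := isUnit_mul_transpose_of_rank_eq_card (by simpa using hFrank)
  have hFFt_det : 0 < (F * Fᵀ).det := by
    refine lt_of_le_of_ne ?_ ((isUnit_iff_isUnit_det _).mp hFFt).ne_zero.symm
    simpa [conjTranspose_eq_transpose_of_trivial] using
      (posSemidef_self_mul_conjTranspose F).det_nonneg
  rw [transpose_mul, Matrix.mul_assoc, det_mul, ← Matrix.mul_assoc, det_mul, det_transpose]
  suffices Q.det ^ 2 < 1 by nlinarith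
  by_contra! hQdet
  have hQF_col : (1 ᵥ* Q) ᵥ* F = 1 ᵥ* F := by
    rw [vecMul_vecMul]
    ext n
    simp only [vecMul, dotProduct, Pi.one_apply, one_mul, hQF1, hF1]
  have hcol : 1 ᵥ* Q = 1 :=
    vecMul_injective_iff_isUnit.mpr hFFt <| by simp only [← vecMul_vecMul, hQF_col]
  have hrow : ∀ i, l2norm (Q i) ≤ ∑ j, Q i j := fun i =>
    l2norm_le_sum_of_forall_socC _ fun x hx => mulVec_nonneg_of_mem_coneOf hQF0 (hFssc.1 hx) i
  have hQQt : Q * Qᵀ = 1 := mul_transpose_eq_one_of_l2norm_le_row_sum hrow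
    (fun j => by simpa [vecMul, dotProduct] using congrFun hcol j) hQdet
  exact hFssc.2 Qᵀ (by rwa [transpose_transpose]) (fun h => hQnp h.of_transpose)
    (coneOf_subset_coneOf_transpose (mul_eq_one_comm.mp hQQt) hQF0)

theorem stmt10 {K N : ℕ}
    (F : Matrix (Fin K) (Fin N) ℝ)
    (hF0 : ∀ k n, 0 ≤ F k n) (hF1 : ∀ n, ∑ k, F k n = 1)
    (hFrank : F.rank = K) (hFssc : SSC F)
    (Q : Matrix (Fin K) (Fin K) ℝ) (hQinv : Q.det ≠ 0) (hQnp : ¬ IsPermMatrix Q)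
    (hQF0 : ∀ k n, 0 ≤ (Q * F) k n) (hQF1 : ∀ n, ∑ k, (Q * F) k n = 1) :
    ((Q * F) * (Q * F)ᵀ).det < (F * Fᵀ).det :=
  stmt10_general F hF1 hFrank hFssc Q hQnp hQF0 hQF1
end
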